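/- arXiv:2402.12705 — 9 statements merged into one kernel-verified Lean document; each statement's English description precedes it below -/
import Mathlib

section
/- Let G be a connected graph of diameter at most d with n < k vertices. Then for any two (d,k)-colorings α, β of G, there exists a sequence of (d,k)-colorings from α to β in which consecutive colorings differ at exactly one vertex. -/
/-!
Since the diameter is at most `d`, a `(d,k)`-coloring is just an injective map `V → Fin k`,
and with `|V| < k` some color is always unused. To make `α` agree with `β` at a vertex `v`,
first move the vertex currently holding the color `β v` (if any) to an unused color, then
recolor `v` with `β v`. This keeps every coloring injective and strictly shrinks the set of
vertices where the current coloring differs from `β`.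
-/

/-- A (d,k)-coloring: distinct vertices at distance at most d (and reachable)
receive different colors. -/
def IsDKColoring {V : Type*} (G : SimpleGraph V) (d k : ℕ) (α : V → Fin k) : Prop :=
  ∀ u v : V, u ≠ v → G.Reachable u v → G.dist u v ≤ d → α u ≠ α v

/-- Two colorings differ at exactly one vertex. -/
def OneStep {V : Type*} {k : ℕ} (α β : V → Fin k) : Prop :=
  ∃ v : V, α v ≠ β v ∧ ∀ w : V, w ≠ v → α w = β w

open Function Relation

section Reconfiguration

variable {V : Type*} {k : ℕ}

def RecolorStep (P : (V → Fin k) → Prop) (α β : V → Fin k) : Prop :=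
  P β ∧ OneStep α β

theorem exists_seq_of_reflTransGen_recolorStep {P : (V → Fin k) → Prop} {α β : V → Fin k}
    (hα : P α) (h : ReflTransGen (RecolorStep P) α β) :
    ∃ (m : ℕ) (seq : ℕ → V → Fin k), seq 0 = α ∧ seq m = β ∧ (∀ i ≤ m, P (seq i)) ∧
      (∀ i < m, OneStep (seq i) (seq (i + 1))) := by
  induction h using ReflTransGen.head_induction_on with
  | refl => exact ⟨0, fun _ => β, rfl, rfl, fun _ _ => hα, fun _ h => absurd h (Nat.not_lt_zero _)⟩
  | head hstep _ ih =>
    obtain ⟨m, seq, h0, hm, hP, hS⟩ := ih hstep.1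
    refine ⟨m + 1, fun | 0 => _ | i + 1 => seq i, rfl, hm, ?_, ?_⟩
    · rintro (_ | i) hi
      exacts [hα, hP i (Nat.succ_le_succ_iff.mp hi)]
    · rintro (_ | i) hi
      exacts [(h0 ▸ hstep.2 : OneStep _ (seq 0)), hS i (Nat.succ_lt_succ_iff.mp hi)]

theorem exists_forall_ne_of_card_lt [Fintype V] (hcard : Fintype.card V < k) (α : V → Fin k) :
    ∃ c, ∀ x, α x ≠ c := by
  by_contra! h
  have := Fintype.card_le_of_surjective α h
  simp only [Fintype.card_fin] at this
  omega

variable [DecidableEq V]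

theorem oneStep_update {α : V → Fin k} {v : V} {c : Fin k} (h : α v ≠ c) :
    OneStep α (update α v c) :=
  ⟨v, by rwa [update_self], fun _ hw => (update_of_ne hw c α).symm⟩

theorem Function.Injective.update_of_forall_ne {α : V → Fin k} (hα : Injective α) {v : V}
    {c : Fin k} (hc : ∀ x, x ≠ v → α x ≠ c) : Injective (update α v c) := by
  intro x y h
  by_cases hx : x = v <;> by_cases hy : y = v
  · rw [hx, hy]
  · simp only [hx, hy, update_self, update_of_ne, ne_eq, not_false_eq_true] at h
    exact absurd h.symm (hc y hy)
  · simp only [hx, hy, update_self, update_of_ne, ne_eq, not_false_eq_true] at h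
    exact absurd h (hc x hx)
  · rw [update_of_ne hx, update_of_ne hy] at h
    exact hα h

theorem reflTransGen_recolorStep_update {α : V → Fin k} (hα : Injective α) {v : V}
    {c : Fin k} (hc : ∀ x, α x ≠ c) :
    ReflTransGen (RecolorStep Injective) α (update α v c) :=
  .single ⟨hα.update_of_forall_ne fun x _ => hc x, oneStep_update (hc v)⟩

variable [Fintype V]

theorem exists_reflTransGen_recolorStep_forall_ne (hcard : Fintype.card V < k)
    {α : V → Fin k} (hα : Injective α) (b : Fin k) :
    ∃ α', ReflTransGen (RecolorStep Injective) α α' ∧ Injective α' ∧ (∀ x, α' x ≠ b) ∧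
      ∀ x, α' x ≠ α x → α x = b := by
  by_cases hb : ∃ w, α w = b
  · obtain ⟨w, rfl⟩ := hb
    obtain ⟨c, hc⟩ := exists_forall_ne_of_card_lt hcard α
    refine ⟨update α w c, reflTransGen_recolorStep_update hα hc,
      hα.update_of_forall_ne fun x _ => hc x, fun x => ?_, fun x hx => ?_⟩
    · by_cases hx : x = w
      · rw [hx, update_self]
        exact (hc w).symm
      · rw [update_of_ne hx]
        exact hα.ne hx
    · by_cases hxw : x = w
      · rw [hxw]
      · exact absurd (update_of_ne hxw c α) hx
  · exact ⟨α, .refl, hα, not_exists.mp hb, fun _ h => absurd rfl h⟩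

def disagreeSet (α β : V → Fin k) : Finset V :=
  Finset.univ.filter fun x => α x ≠ β x

theorem exists_reflTransGen_recolorStep_disagreeSet_ssubset (hcard : Fintype.card V < k)
    {α β : V → Fin k} (hα : Injective α) (hβ : Injective β) (hne : α ≠ β) :
    ∃ α', ReflTransGen (RecolorStep Injective) α α' ∧ Injective α' ∧
      disagreeSet α' β ⊂ disagreeSet α β := by
  obtain ⟨v, hv⟩ := Function.ne_iff.mp hne
  obtain ⟨α₁, hreach, hα₁, hfree, hchanged⟩ :=
    exists_reflTransGen_recolorStep_forall_ne hcard hα (β v)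
  refine ⟨update α₁ v (β v), hreach.trans (reflTransGen_recolorStep_update hα₁ hfree),
    hα₁.update_of_forall_ne fun x _ => hfree x, ?_⟩
  refine Finset.ssubset_iff_of_subset (fun x hx => ?_) |>.mpr
    ⟨v, by simp [disagreeSet, hv], by simp [disagreeSet]⟩
  simp only [disagreeSet, Finset.mem_filter, Finset.mem_univ, true_and] at hx ⊢
  have hxv : x ≠ v := by
    rintro rfl
    exact hx (update_self ..)
  rw [update_of_ne hxv] at hx
  intro hxβ
  by_cases hfix : α₁ x = α x
  · exact hx (hfix.trans hxβ)
  · exact hxv (hβ (hxβ.symm.trans (hchanged x hfix)))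

theorem reflTransGen_recolorStep_injective (hcard : Fintype.card V < k) {α β : V → Fin k}
    (hα : Injective α) (hβ : Injective β) : ReflTransGen (RecolorStep Injective) α β := by
  induction hn : (disagreeSet α β).card using Nat.strong_induction_on generalizing α with
  | _ n ih =>
    by_cases hne : α = β
    · exact hne ▸ .refl
    obtain ⟨α', hreach, hα', hlt⟩ :=
      exists_reflTransGen_recolorStep_disagreeSet_ssubset hcard hα hβ hne
    exact hreach.trans (ih _ (hn ▸ Finset.card_lt_card hlt) hα' rfl)

end Reconfiguration

theorem isDKColoring_iff_injective {V : Type*} {G : SimpleGraph V} {d k : ℕ}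
    (hconn : G.Preconnected) (hdiam : ∀ u v : V, G.dist u v ≤ d) {γ : V → Fin k} :
    IsDKColoring G d k γ ↔ Injective γ :=
  ⟨fun h x y hxy => by_contra fun hne => h x y hne (hconn x y) (hdiam x y) hxy,
    fun h _ _ huv _ _ hc => huv (h hc)⟩

theorem reconf_when_card_lt_k {V : Type*} [Fintype V] (G : SimpleGraph V) (d k : ℕ)
    (hconn : G.Connected) (hdiam : ∀ u v : V, G.dist u v ≤ d)
    (hcard : Fintype.card V < k)
    (α β : V → Fin k) (hα : IsDKColoring G d k α) (hβ : IsDKColoring G d k β) :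
    ∃ (m : ℕ) (seq : ℕ → V → Fin k),
      seq 0 = α ∧ seq m = β ∧
      (∀ i ≤ m, IsDKColoring G d k (seq i)) ∧
      (∀ i < m, OneStep (seq i) (seq (i + 1))) := by
  classical
  have hcol := fun γ : V → Fin k => isDKColoring_iff_injective (γ := γ) hconn.preconnected hdiam
  have hαinj := (hcol α).mp hα
  obtain ⟨m, seq, h0, hm, hinj, hstep⟩ := exists_seq_of_reflTransGen_recolorStep hαinj
    (reflTransGen_recolorStep_injective hcard hαinj ((hcol β).mp hβ))
  exact ⟨m, seq, h0, hm, fun i hi => (hcol _).mpr (hinj i hi), hstep⟩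
end

section
/- Let P be a path on n vertices v_1,...,v_n, let d ≥ 1, and let α be a (d, d+1)-coloring of P. Then for every pair of indices i, i' with i ≡ i' (mod d+1), we have α(v_i) = α(v_{i'}). In other words, the coloring is periodic with period d+1. -/
/-!
Any `d + 1` consecutive vertices are pairwise at distance at most `d`, so they receive all `d + 1`
colors. In particular the color of `v_i` occurs among `v_{i+1}, …, v_{i+d+1}`, and it cannot occur
within distance `d` of `v_i`, so it is the color of `v_{i+d+1}`. Iterating gives the period.
-/

/-- A (d,k)-coloring of the path on `n` vertices `v_0, …, v_{n-1}`
(distance between `v_i` and `v_j` is `|i - j|`). -/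
def IsPathDKColoring (n d k : ℕ) (α : Fin n → Fin k) : Prop :=
  ∀ i j : Fin n, i ≠ j → Nat.dist i.val j.val ≤ d → α i ≠ α j

namespace IsPathDKColoring

variable {n d : ℕ}

theorem apply_ne {k : ℕ} {α : Fin n → Fin k} (hα : IsPathDKColoring n d k α) {i j : Fin n}
    (hij : i < j) (hji : j.val ≤ i.val + d) : α i ≠ α j :=
  hα i j hij.ne (by rw [Fin.lt_def] at hij; unfold Nat.dist; omega)

variable {α : Fin n → Fin (d + 1)}

theorem apply_eq_of_val_eq_add (hα : IsPathDKColoring n d (d + 1) α) {i j : Fin n}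
    (hj : j.val = i.val + (d + 1)) : α i = α j := by
  let window : Fin (d + 1) → Fin (d + 1) := fun k => α ⟨i + 1 + k, by omega⟩
  have window_injective : Function.Injective window := by
    intro a b hab
    by_contra hne
    rcases Fin.lt_or_lt_of_ne hne with h | h
    · exact hα.apply_ne (Fin.mk_lt_mk.mpr (by omega)) (by simp only; omega) hab
    · exact hα.apply_ne (Fin.mk_lt_mk.mpr (by omega)) (by simp only; omega) hab.symm
  obtain ⟨k, hk⟩ := Finite.surjective_of_injective window_injective (α i)
  have hk_last : k.val = d := by
    by_contra hne
    exact hα.apply_ne (j := ⟨i + 1 + k, by omega⟩) (Fin.mk_lt_mk.mpr (by omega))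
      (by simp only; omega) hk.symm
  rw [← hk]
  exact congrArg α (Fin.ext (by simp only; omega))

theorem apply_eq_of_val_eq_add_mul (hα : IsPathDKColoring n d (d + 1) α) (m : ℕ) :
    ∀ {i j : Fin n}, j.val = i.val + (d + 1) * m → α i = α j := by
  induction m with
  | zero => intro i j hj; exact congrArg α (Fin.ext (by simpa using hj.symm))
  | succ m ih =>
    intro i j hj
    rw [Nat.mul_succ] at hj
    exact (ih (j := ⟨i + (d + 1) * m, by omega⟩) rfl).trans
      (hα.apply_eq_of_val_eq_add (by simp only; omega))

end IsPathDKColoring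

theorem path_d_succ_coloring_periodic_general (n d : ℕ)
    (α : Fin n → Fin (d + 1)) (hα : IsPathDKColoring n d (d + 1) α) :
    ∀ i i' : Fin n, i.val % (d + 1) = i'.val % (d + 1) → α i = α i' := by
  intro i i' hmod
  wlog hle : i ≤ i' generalizing i i'
  · exact (this i' i hmod.symm (le_of_not_ge hle)).symm
  obtain ⟨m, hm⟩ := (Nat.modEq_iff_dvd' hle).mp hmod
  exact hα.apply_eq_of_val_eq_add_mul m (by omega)

theorem path_d_succ_coloring_periodic (n d : ℕ) (hd : 1 ≤ d)
    (α : Fin n → Fin (d + 1)) (hα : IsPathDKColoring n d (d + 1) α) :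
    ∀ i i' : Fin n, i.val % (d + 1) = i'.val % (d + 1) → α i = α i' :=
  path_d_succ_coloring_periodic_general n d α hα
end

section
/- Let P be a path on n ≥ d+2 vertices and let α be a (d, d+1)-coloring of P. Then no vertex of P can be recolored: there is no (d, d+1)-coloring β of P that differs from α at exactly one vertex. -/
theorem path_d_succ_coloring_frozen (n d : ℕ) (hd : 1 ≤ d) (hn : d + 2 ≤ n)
    (α : Fin n → Fin (d + 1)) (hα : IsPathDKColoring n d (d + 1) α) :
    ¬ ∃ β : Fin n → Fin (d + 1), IsPathDKColoring n d (d + 1) β ∧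
      ∃ v : Fin n, α v ≠ β v ∧ ∀ w : Fin n, w ≠ v → α w = β w := by
  rintro ⟨β, hβ, v, hv, hw⟩
  have hvlt := v.isLt
  set a := min v.val (n - 1 - d) with ha
  have h1 : a ≤ v.val := by omega
  have h2 : v.val ≤ a + d := by omega
  have h3 : a + d < n := by omega
  set f : Fin (d + 1) → Fin (d + 1) :=
    fun i => α ⟨a + i.val, by have := i.isLt; omega⟩ with hf
  have hinj : Function.Injective f := by
    intro i j hij
    by_contra hne
    have hi := i.isLt
    have hj := j.isLt
    refine hα ⟨a + i.val, by omega⟩ ⟨a + j.val, by omega⟩ ?_ ?_ hij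
    · simp only [ne_eq, Fin.mk.injEq]
      intro h
      exact hne (Fin.ext (by omega))
    · rw [Nat.dist]
      simp only []
      omega
  have hsurj : Function.Surjective f := Finite.surjective_of_injective hinj
  obtain ⟨i, hi⟩ := hsurj (β v)
  have hi1 := i.isLt
  by_cases hcase : a + i.val = v.val
  · apply hv
    have : (⟨a + i.val, by omega⟩ : Fin n) = v := Fin.ext hcase
    rw [← hi, hf]
    simp only []
    rw [this]
  · have hne : (⟨a + i.val, by omega⟩ : Fin n) ≠ v := by
      intro h
      exact hcase (congrArg Fin.val h)
    have hb : β ⟨a + i.val, by omega⟩ = β v := by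
      rw [← hw _ hne, ← hi, hf]
    refine hβ ⟨a + i.val, by omega⟩ v hne ?_ hb
    show Nat.dist (a + i.val) v.val ≤ d
    rw [Nat.dist]
    omega
end

section
/- Let d ≥ 2 and let C = {c_1,...,c_p} be a set of colors disjoint from {1,2,3} with p ≥ d+1. Let P = v_0 v_1 ... v_{p+2} be a path with color lists L(v_0) = L_u ⊆ {1,2,3}, L(v_{p+2}) = L_v ⊆ {1,2,3}, a ∈ L_u, b ∈ L_v, L(v_1) = {a, c_1}, L(v_{p+1}) = {c_p, b}, and L(v_i) = {c_{i-1}, c_i} for 2 ≤ i ≤ p. Then there exists a list (d,k)-coloring γ of P with γ(v_0) = x and γ(v_{p+2}) = y if and only if x ∈ L_u, y ∈ L_v, and (x,y) ≠ (a,b). -/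
/-!
Let `s` be the sequence `a, c₁, …, c_p, b`, so that `L(v_{i+1}) = {s i, s (i+1)}` for `i ≤ p`.
If `γ(v₀) = a`, distinct colors at adjacent vertices force `γ(v_i) = s i` along the whole path,
so `γ(v_{p+1}) = b ≠ γ(v_{p+2})`. Conversely, if `x ≠ a` color the interior by `s 0, …, s p`,
and if `y ≠ b` by `s 1, …, s (p+1)`: as the `c_i` are distinct and outside `{1, 2, 3}` and
`p ≥ d`, two vertices of the same color are then more than `d` apart.
-/

/-- A list (d,k)-coloring of the path `v_0 v_1 … v_{p+2}` (vertices indexed by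
`0, …, p+2`, distance between `i` and `j` is `|i - j|`) with color lists `L`. -/
def IsListPathColoring (p d : ℕ) (L : ℕ → Set ℕ) (γ : ℕ → ℕ) : Prop :=
  (∀ i ≤ p + 2, γ i ∈ L i) ∧
  ∀ i ≤ p + 2, ∀ j ≤ p + 2, i ≠ j → Nat.dist i j ≤ d → γ i ≠ γ j

section ListPathColoring

variable {p d : ℕ} {L : ℕ → Set ℕ} {γ : ℕ → ℕ}

theorem isListPathColoring_of_lt (hmem : ∀ i ≤ p + 2, γ i ∈ L i)
    (hne : ∀ i j, i < j → j ≤ p + 2 → j - i ≤ d → γ i ≠ γ j) :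
    IsListPathColoring p d L γ := by
  refine ⟨hmem, fun i hi j hj hij hdist => ?_⟩
  unfold Nat.dist at hdist
  rcases Nat.lt_or_gt_of_ne hij with h | h
  · exact hne i j h hj (by omega)
  · exact (hne j i h hi (by omega)).symm

theorem IsListPathColoring.ne_succ (hγ : IsListPathColoring p d L γ) (hd : 1 ≤ d) {i : ℕ}
    (hi : i ≤ p + 1) : γ i ≠ γ (i + 1) :=
  hγ.2 i (by omega) (i + 1) (by omega) (by omega) (by unfold Nat.dist; omega)

theorem IsListPathColoring.eq_of_apply_zero (hγ : IsListPathColoring p d L γ) (hd : 1 ≤ d)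
    {s : ℕ → ℕ} (hL : ∀ i ≤ p, L (i + 1) = {s i, s (i + 1)}) (h0 : γ 0 = s 0) :
    ∀ i ≤ p + 1, γ i = s i := by
  intro i hi
  induction i with
  | zero => exact h0
  | succ i ih =>
    have hmem : γ (i + 1) ∈ L (i + 1) := hγ.1 (i + 1) (by omega)
    rw [hL i (by omega)] at hmem
    rcases hmem with h | h
    · exact absurd (by rw [ih (by omega), h]) (hγ.ne_succ hd (i := i) (by omega))
    · exact h

theorem IsListPathColoring.apply_last_ne (hγ : IsListPathColoring p d L γ) (hd : 1 ≤ d)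
    {s : ℕ → ℕ} (hL : ∀ i ≤ p, L (i + 1) = {s i, s (i + 1)}) (h0 : γ 0 = s 0) :
    γ (p + 2) ≠ s (p + 1) := by
  rw [← hγ.eq_of_apply_zero hd hL h0 (p + 1) le_rfl]
  exact (hγ.ne_succ hd le_rfl).symm

end ListPathColoring

/-- The sequence `a, c₁, …, c_p, b`: the list of `v_{i+1}` is `{spine i, spine (i + 1)}`. -/
def spine (p a b : ℕ) (c : ℕ → ℕ) (i : ℕ) : ℕ :=
  if i = 0 then a else if i ≤ p then c i else b

section Spine

variable {p a b : ℕ} {c : ℕ → ℕ}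

@[simp]
theorem spine_zero : spine p a b c 0 = a := rfl

@[simp]
theorem spine_add_one_self : spine p a b c (p + 1) = b := by
  simp [spine]

theorem spine_of_pos_of_le {i : ℕ} (h1 : 1 ≤ i) (hp : i ≤ p) : spine p a b c i = c i := by
  rw [spine, if_neg (by omega), if_pos hp]

theorem lists_eq_spine (hp : 1 ≤ p) {L : ℕ → Set ℕ} (hL1 : L 1 = {a, c 1})
    (hLp1 : L (p + 1) = {c p, b}) (hLmid : ∀ i, 2 ≤ i → i ≤ p → L i = {c (i - 1), c i}) :
    ∀ i ≤ p, L (i + 1) = {spine p a b c i, spine p a b c (i + 1)} := by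
  intro i hi
  rcases Nat.eq_zero_or_pos i with rfl | hi0
  · rwa [spine_zero, spine_of_pos_of_le le_rfl hp]
  rcases hi.lt_or_eq with hip | rfl
  · rw [hLmid (i + 1) (by omega) (by omega), spine_of_pos_of_le hi0 hi,
      spine_of_pos_of_le (by omega) hip, Nat.add_sub_cancel]
  · rw [hLp1, spine_of_pos_of_le hi0 le_rfl, spine_add_one_self]

theorem spine_ne_spine {T : Set ℕ}
    (hcinj : ∀ i j, 1 ≤ i → i ≤ p → 1 ≤ j → j ≤ p → c i = c j → i = j)
    (hc : ∀ i, 1 ≤ i → i ≤ p → c i ∉ T) (ha : a ∈ T) (hb : b ∈ T) {i j : ℕ} (hij : i < j)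
    (hj : j ≤ p + 1) (hji : j - i ≤ p) : spine p a b c i ≠ spine p a b c j := by
  simp only [spine]
  split_ifs <;> first
    | omega
    | exact fun h => hc _ (by omega) (by omega) (h ▸ ha)
    | exact fun h => hc _ (by omega) (by omega) (h ▸ hb)
    | exact fun h => absurd (hcinj i j (by omega) (by omega) (by omega) (by omega) h) (by omega)

theorem spine_ne_of_mem {T : Set ℕ} (hc : ∀ i, 1 ≤ i → i ≤ p → c i ∉ T) {z : ℕ} (hz : z ∈ T)
    {i : ℕ} (h1 : 1 ≤ i) (hp : i ≤ p) : spine p a b c i ≠ z := by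
  rw [spine_of_pos_of_le h1 hp]
  exact fun h => hc i h1 hp (h ▸ hz)

end Spine

/-- The coloring `x, s k, …, s (k + p), y`; for `k = 0` (resp. `1`) each interior vertex takes the
first (resp. second) color of its list `{s i, s (i + 1)}`. -/
def spineColoring (p k x y : ℕ) (s : ℕ → ℕ) (i : ℕ) : ℕ :=
  if i = 0 then x else if i ≤ p + 1 then s (i - 1 + k) else y

section SpineColoring

variable {p d k x y : ℕ} {L : ℕ → Set ℕ} {s : ℕ → ℕ}

theorem isListPathColoring_spineColoring (hk : k ≤ 1) (hdp : d ≤ p)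
    (hL : ∀ i ≤ p, L (i + 1) = {s i, s (i + 1)})
    (hs : ∀ i j, i < j → j ≤ p + 1 → j - i ≤ d → s i ≠ s j) (hx : x ∈ L 0) (hy : y ∈ L (p + 2))
    (hxs : ∀ i, k ≤ i → i ≤ p → s i ≠ x) (hys : ∀ i, 1 ≤ i → i ≤ p + k → s i ≠ y) :
    IsListPathColoring p d L (spineColoring p k x y s) := by
  apply isListPathColoring_of_lt
  · intro i hi
    simp only [spineColoring]
    split_ifs with h0 h1
    · exact h0 ▸ hx
    · obtain ⟨i, rfl⟩ : ∃ j, i = j + 1 := ⟨i - 1, by omega⟩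
      rw [hL i (by omega), Nat.add_sub_cancel]
      interval_cases k
      · exact Or.inl rfl
      · exact Or.inr rfl
    · rwa [show i = p + 2 by omega]
  · intro i j hij hj hji
    simp only [spineColoring]
    split_ifs <;> first
      | omega
      | exact fun h => hxs _ (by omega) (by omega) h.symm
      | exact hys _ (by omega) (by omega)
      | exact hs _ _ (by omega) (by omega) (by omega)

theorem exists_isListPathColoring_of_spine (hdp : d ≤ p)
    (hL : ∀ i ≤ p, L (i + 1) = {s i, s (i + 1)})
    (hs : ∀ i j, i < j → j ≤ p + 1 → j - i ≤ d → s i ≠ s j) (hx : x ∈ L 0) (hy : y ∈ L (p + 2))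
    (hxs : ∀ i, 1 ≤ i → i ≤ p → s i ≠ x) (hys : ∀ i, 1 ≤ i → i ≤ p → s i ≠ y)
    (hends : s 0 ≠ x ∨ s (p + 1) ≠ y) :
    ∃ γ, IsListPathColoring p d L γ ∧ γ 0 = x ∧ γ (p + 2) = y := by
  obtain ⟨k, hk, hxk, hyk⟩ : ∃ k ≤ 1,
      (∀ i, k ≤ i → i ≤ p → s i ≠ x) ∧ (∀ i, 1 ≤ i → i ≤ p + k → s i ≠ y) := by
    rcases hends with hx0 | hyp
    · refine ⟨0, zero_le_one, fun i _ hi => ?_, hys⟩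
      rcases i.eq_zero_or_pos with rfl | h1
      exacts [hx0, hxs i h1 hi]
    · refine ⟨1, le_rfl, hxs, fun i h1 hi => ?_⟩
      rcases hi.lt_or_eq with hi | rfl
      exacts [hys i h1 (by omega), hyp]
  exact ⟨spineColoring p k x y s, isListPathColoring_spineColoring hk hdp hL hs hx hy hxk hyk,
    by simp [spineColoring], by simp [spineColoring]⟩

end SpineColoring

theorem forbidding_path_admissible (d p : ℕ) (hd : 2 ≤ d) (hp : d + 1 ≤ p)
    (c : ℕ → ℕ)
    (hcinj : ∀ i j, 1 ≤ i → i ≤ p → 1 ≤ j → j ≤ p → c i = c j → i = j)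
    (hc : ∀ i, 1 ≤ i → i ≤ p → c i ∉ ({1, 2, 3} : Set ℕ))
    (Lu Lv : Set ℕ) (hLu : Lu ⊆ {1, 2, 3}) (hLv : Lv ⊆ {1, 2, 3})
    (a b : ℕ) (ha : a ∈ Lu) (hb : b ∈ Lv)
    (L : ℕ → Set ℕ) (hL0 : L 0 = Lu) (hLend : L (p + 2) = Lv)
    (hL1 : L 1 = {a, c 1}) (hLp1 : L (p + 1) = {c p, b})
    (hLmid : ∀ i, 2 ≤ i → i ≤ p → L i = {c (i - 1), c i}) :
    ∀ x y : ℕ,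
      (∃ γ : ℕ → ℕ, IsListPathColoring p d L γ ∧ γ 0 = x ∧ γ (p + 2) = y) ↔
      (x ∈ Lu ∧ y ∈ Lv ∧ (x, y) ≠ (a, b)) := by
  intro x y
  have hL := lists_eq_spine (by omega) hL1 hLp1 hLmid
  constructor
  · rintro ⟨γ, hγ, rfl, rfl⟩
    refine ⟨hL0 ▸ hγ.1 0 (by omega), hLend ▸ hγ.1 (p + 2) le_rfl, fun hab => ?_⟩
    obtain ⟨h0, hend⟩ := Prod.mk.inj hab
    exact hγ.apply_last_ne (by omega) hL (by simpa using h0) (by simpa using hend)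
  · rintro ⟨hx, hy, hxy⟩
    refine exists_isListPathColoring_of_spine (by omega) hL
      (fun i j hij hj _ => spine_ne_spine hcinj hc (hLu ha) (hLv hb) hij hj (by omega))
      (hL0 ▸ hx) (hLend ▸ hy) (fun _ => spine_ne_of_mem hc (hLu hx))
      (fun _ => spine_ne_of_mem hc (hLv hy)) ?_
    rw [spine_zero, spine_add_one_self, ne_comm, ne_comm (a := b), ← not_and_or]
    exact fun ⟨hxa, hyb⟩ => hxy (by rw [hxa, hyb])
end

section
/- With the setup of the (C,a,b)-forbidding path P = v_0...v_{p+2} (lists as defined, p ≥ d+1): if v_0 is colored a in a list (d,k)-coloring of P, then necessarily v_i is colored c_i for all 1 ≤ i ≤ p and v_{p+1} is colored b, so v_{p+2} cannot be colored b. -/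
theorem forbidding_path_forced (d p : ℕ) (hd : 2 ≤ d) (hp : d + 1 ≤ p)
    (c : ℕ → ℕ)
    (hcinj : ∀ i j, 1 ≤ i → i ≤ p → 1 ≤ j → j ≤ p → c i = c j → i = j)
    (hc : ∀ i, 1 ≤ i → i ≤ p → c i ∉ ({1, 2, 3} : Set ℕ))
    (Lu Lv : Set ℕ) (hLu : Lu ⊆ {1, 2, 3}) (hLv : Lv ⊆ {1, 2, 3})
    (a b : ℕ) (ha : a ∈ Lu) (hb : b ∈ Lv)
    (L : ℕ → Set ℕ) (hL0 : L 0 = Lu) (hLend : L (p + 2) = Lv)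
    (hL1 : L 1 = {a, c 1}) (hLp1 : L (p + 1) = {c p, b})
    (hLmid : ∀ i, 2 ≤ i → i ≤ p → L i = {c (i - 1), c i})
    (γ : ℕ → ℕ) (hγ : IsListPathColoring p d L γ) (hγ0 : γ 0 = a) :
    (∀ i, 1 ≤ i → i ≤ p → γ i = c i) ∧ γ (p + 1) = b ∧ γ (p + 2) ≠ b := by
  obtain ⟨hmem, hne⟩ := hγ
  have dist1 : ∀ n : ℕ, Nat.dist n (n + 1) = 1 := by
    intro n; simp [Nat.dist]
  have key : ∀ i, 1 ≤ i → i ≤ p → γ i = c i := by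
    intro i
    induction i with
    | zero => omega
    | succ n ih =>
      intro h1 h2
      have hne' : γ n ≠ γ (n + 1) := by
        apply hne n (by omega) (n + 1) (by omega) (by omega)
        rw [dist1]; omega
      rcases Nat.eq_zero_or_pos n with hn | hn
      · subst hn
        have hm := hmem 1 (by omega)
        rw [hL1] at hm
        rcases hm with h | h
        · exfalso; exact hne' (by rw [hγ0, h])
        · exact h
      · have hm := hmem (n + 1) (by omega)
        rw [hLmid (n + 1) (by omega) h2] at hm
        have hsub : n + 1 - 1 = n := by omega
        rw [hsub] at hm
        rcases hm with h | h
        · exfalso; exact hne' (by rw [ih hn (by omega), h])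
        · exact h
  have hp1 : γ (p + 1) = b := by
    have hne' : γ p ≠ γ (p + 1) := by
      apply hne p (by omega) (p + 1) (by omega) (by omega)
      rw [dist1]; omega
    have hm := hmem (p + 1) (by omega)
    rw [hLp1] at hm
    rcases hm with h | h
    · exfalso; exact hne' (by rw [key p (by omega) le_rfl, h])
    · exact h
  refine ⟨key, hp1, ?_⟩
  have hne' : γ (p + 1) ≠ γ (p + 2) := by
    apply hne (p + 1) (by omega) (p + 2) (by omega) (by omega)
    rw [show p + 2 = (p + 1) + 1 from rfl, dist1]; omega
  rw [← hp1]; exact fun h => hne' h.symm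
end

section
/- Let P = v_0...v_{p+2} be the (C,a,b)-forbidding path with p ≥ d+1 as defined. If (x,y) and (x,y') are both admissible pairs (x ∈ L(v_0), y, y' ∈ L(v_{p+2}), (x,y) ≠ (a,b) ≠ (x,y')), then from any list (d,k)-coloring with endpoints colored (x,y), there is a reconfiguration sequence of list (d,k)-colorings ending in a coloring with endpoints (x,y'), never recoloring v_0, and recoloring v_{p+2} only in the last step. -/
private lemma forbidding_key (d p : ℕ) (hd : 2 ≤ d) (hp : d + 1 ≤ p)
    (c : ℕ → ℕ)
    (hcinj : ∀ i j, 1 ≤ i → i ≤ p → 1 ≤ j → j ≤ p → c i = c j → i = j)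
    (hc : ∀ i, 1 ≤ i → i ≤ p → c i ∉ ({1, 2, 3} : Set ℕ))
    (Lu Lv : Set ℕ) (hLu : Lu ⊆ {1, 2, 3}) (hLv : Lv ⊆ {1, 2, 3})
    (a b : ℕ) (ha : a ∈ Lu) (hb : b ∈ Lv)
    (L : ℕ → Set ℕ) (hL0 : L 0 = Lu) (hLend : L (p + 2) = Lv)
    (hL1 : L 1 = {a, c 1}) (hLp1 : L (p + 1) = {c p, b})
    (hLmid : ∀ i, 2 ≤ i → i ≤ p → L i = {c (i - 1), c i})
    (x y y' : ℕ) (hx : x ∈ Lu) (hy : y ∈ Lv) (hy' : y' ∈ Lv)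
    (γ : ℕ → ℕ) (hγ : IsListPathColoring p d L γ)
    (hγ0 : γ 0 = x) (hγend : γ (p + 2) = y)
    (hyy' : y ≠ y')
    (t : ℕ) (ht1 : 1 ≤ t) (ht2 : t ≤ p + 2)
    (hchain : ∀ i, t ≤ i → i ≤ p → γ i = c i)
    (hchainb : t ≤ p + 1 → γ (p + 1) = b)
    (hmin : 2 ≤ t → t ≤ p + 1 → γ (t - 1) ≠ c (t - 1))
    (hxa : t = 1 → x ≠ a)
    (heasy : t = p + 2 → γ (p + 1) ≠ y') :
    ∃ (m : ℕ) (seq : ℕ → ℕ → ℕ),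
      seq 0 = γ ∧
      (∀ i ≤ m, IsListPathColoring p d L (seq i)) ∧
      seq m 0 = x ∧ seq m (p + 2) = y' ∧
      (∀ i < m, ∃ v ≤ p + 2,
        v ≠ 0 ∧
        (v = p + 2 → i + 1 = m) ∧
        seq i v ≠ seq (i + 1) v ∧
        ∀ w ≤ p + 2, w ≠ v → seq i w = seq (i + 1) w) := by
  classical
  obtain ⟨hmem, hproper⟩ := hγ
  have ha3 : a ∈ ({1, 2, 3} : Set ℕ) := hLu ha
  have hb3 : b ∈ ({1, 2, 3} : Set ℕ) := hLv hb
  have hx3 : x ∈ ({1, 2, 3} : Set ℕ) := hLu hx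
  have hy3 : y ∈ ({1, 2, 3} : Set ℕ) := hLv hy
  have hy'3 : y' ∈ ({1, 2, 3} : Set ℕ) := hLv hy'
  have hcne : ∀ i s, 1 ≤ i → i ≤ p → s ∈ ({1, 2, 3} : Set ℕ) → c i ≠ s :=
    fun i s h1 h2 hs heq => hc i h1 h2 (heq ▸ hs)
  have hg1 : γ 1 = a ∨ γ 1 = c 1 := by
    have := hmem 1 (by omega); rw [hL1] at this; simpa using this
  have hgmid : ∀ i, 2 ≤ i → i ≤ p → γ i = c (i - 1) ∨ γ i = c i := by
    intro i h1 h2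
    have := hmem i (by omega); rw [hLmid i h1 h2] at this; simpa using this
  have hgp1 : γ (p + 1) = c p ∨ γ (p + 1) = b := by
    have := hmem (p + 1) (by omega); rw [hLp1] at this; simpa using this
  set f : ℕ → ℕ := fun i => if i = 1 then a else if i = p + 2 then y' else c (i - 1)
    with hfdef
  have hfa : f 1 = a := by simp [hfdef]
  have hfend : f (p + 2) = y' := by
    simp [hfdef]
  have hfc : ∀ i, 2 ≤ i → i ≤ p + 1 → f i = c (i - 1) := by
    intro i h1 h2
    simp only [hfdef]; rw [if_neg (by omega), if_neg (by omega)]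
  refine ⟨p + 3 - t, fun k i => if t ≤ i ∧ i < t + k then f i else γ i, ?_, ?_, ?_, ?_, ?_⟩
  · funext i
    exact if_neg (by omega)
  · intro k hk
    constructor
    · intro i hi
      show (if t ≤ i ∧ i < t + k then f i else γ i) ∈ L i
      by_cases hri : t ≤ i ∧ i < t + k
      · rw [if_pos hri]
        by_cases i1 : i = 1
        · rw [i1, hfa, hL1]; exact Set.mem_insert _ _
        · by_cases iend : i = p + 2
          · rw [iend, hfend, hLend]; exact hy'
          · by_cases ip : i ≤ p
            · rw [hfc i (by omega) (by omega), hLmid i (by omega) ip]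
              exact Set.mem_insert _ _
            · have hip1 : i = p + 1 := by omega
              rw [hip1, hfc (p + 1) (by omega) (by omega), hLp1]
              have : p + 1 - 1 = p := by omega
              rw [this]; exact Set.mem_insert _ _
      · rw [if_neg hri]; exact hmem i hi
    · have main : ∀ i j, i < j → j ≤ p + 2 → Nat.dist i j ≤ d →
          (if t ≤ i ∧ i < t + k then f i else γ i) ≠
            (if t ≤ j ∧ j < t + k then f j else γ j) := by
        intro i j hij hj hdist
        have hd' : j - i ≤ d := by
          rwa [Nat.dist_eq_sub_of_le (le_of_lt hij)] at hdist
        by_cases ri : t ≤ i ∧ i < t + k <;> by_cases rj : t ≤ j ∧ j < t + k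
        · -- both recolored
          rw [if_pos ri, if_pos rj]
          by_cases i1 : i = 1
          · subst i1
            rw [hfa, hfc j (by omega) (by omega)]
            exact (hcne (j - 1) a (by omega) (by omega) ha3).symm
          · rw [hfc i (by omega) (by omega)]
            by_cases jend : j = p + 2
            · rw [jend, hfend]
              exact hcne (i - 1) y' (by omega) (by omega) hy'3
            · rw [hfc j (by omega) (by omega)]
              intro he
              have := hcinj (i - 1) (j - 1) (by omega) (by omega) (by omega) (by omega) he
              omega
        · -- i recolored, j not
          rw [if_pos ri, if_neg rj]
          by_cases i1 : i = 1
          · subst i1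
            rw [hfa]
            rcases hgmid j (by omega) (by omega) with h | h <;> rw [h]
            · exact (hcne (j - 1) a (by omega) (by omega) ha3).symm
            · exact (hcne j a (by omega) (by omega) ha3).symm
          · rw [hfc i (by omega) (by omega)]
            by_cases jend : j = p + 2
            · rw [jend, hγend]
              exact hcne (i - 1) y (by omega) (by omega) hy3
            · by_cases jp1 : j = p + 1
              · rw [jp1]
                rcases hgp1 with h | h <;> rw [h]
                · intro he
                  have := hcinj (i - 1) p (by omega) (by omega) (by omega) (by omega) he
                  omega
                · exact hcne (i - 1) b (by omega) (by omega) hb3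
              · rcases hgmid j (by omega) (by omega) with h | h <;> rw [h] <;> intro he
                · have := hcinj (i - 1) (j - 1) (by omega) (by omega) (by omega) (by omega) he
                  omega
                · have := hcinj (i - 1) j (by omega) (by omega) (by omega) (by omega) he
                  omega
        · -- j recolored, i not
          rw [if_neg ri, if_pos rj]
          have hit : i < t := by
            by_contra hcon
            exact ri ⟨by omega, by omega⟩
          by_cases j1 : j = 1
          · subst j1
            rw [hfa]
            have hi0 : i = 0 := by omega
            rw [hi0, hγ0]
            exact hxa (by omega)
          · by_cases jend : j = p + 2
            · rw [jend, hfend]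
              by_cases ip1 : i = p + 1
              · rw [ip1]
                exact heasy (by omega)
              · rcases hgmid i (by omega) (by omega) with h | h <;> rw [h]
                · exact hcne (i - 1) y' (by omega) (by omega) hy'3
                · exact hcne i y' (by omega) (by omega) hy'3
            · rw [hfc j (by omega) (by omega)]
              by_cases i0 : i = 0
              · rw [i0, hγ0]
                exact (hcne (j - 1) x (by omega) (by omega) hx3).symm
              · by_cases i1 : i = 1
                · subst i1
                  rcases hg1 with h | h <;> rw [h]
                  · exact (hcne (j - 1) a (by omega) (by omega) ha3).symm
                  · intro he
                    have hj2 : j = 2 := by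
                      have := hcinj 1 (j - 1) (by omega) (by omega) (by omega) (by omega) he
                      omega
                    have ht : t = 2 := by omega
                    exact hmin (by omega) (by omega)
                      (show γ (t - 1) = c (t - 1) by rw [ht]; simpa using h)
                · rcases hgmid i (by omega) (by omega) with h | h <;> rw [h] <;> intro he
                  · have := hcinj (i - 1) (j - 1) (by omega) (by omega) (by omega) (by omega) he
                    omega
                  · have hij1 : i = j - 1 :=
                      hcinj i (j - 1) (by omega) (by omega) (by omega) (by omega) he
                    have ht : t = j := by omega
                    exact hmin (by omega) (by omega)
                      (show γ (t - 1) = c (t - 1) by rw [ht, ← hij1]; exact h)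
        · -- neither recolored
          rw [if_neg ri, if_neg rj]
          exact hproper i (by omega) j (by omega) (by omega) hdist
      intro i hi j hj hij hdist
      rcases lt_or_gt_of_ne hij with h | h
      · exact main i j h hj hdist
      · exact (main j i h hi (by rwa [Nat.dist_comm] at hdist)).symm
  · show (if t ≤ 0 ∧ 0 < t + (p + 3 - t) then f 0 else γ 0) = x
    rw [if_neg (by omega), hγ0]
  · show (if t ≤ p + 2 ∧ p + 2 < t + (p + 3 - t) then f (p + 2) else γ (p + 2)) = y'
    rw [if_pos ⟨ht2, by omega⟩, hfend]
  · intro k hk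
    refine ⟨t + k, by omega, by omega, fun h => by omega, ?_, ?_⟩
    · show (if t ≤ t + k ∧ t + k < t + k then f (t + k) else γ (t + k)) ≠
        (if t ≤ t + k ∧ t + k < t + (k + 1) then f (t + k) else γ (t + k))
      rw [if_neg (by omega), if_pos ⟨by omega, by omega⟩]
      by_cases v1 : t + k = 1
      · rw [v1, hfa, hchain 1 (by omega) (by omega)]
        exact hcne 1 a (by omega) (by omega) ha3
      · by_cases vend : t + k = p + 2
        · rw [vend, hfend, hγend]; exact hyy'
        · by_cases vp1 : t + k = p + 1
          · rw [vp1, hfc (p + 1) (by omega) (by omega), hchainb (by omega)]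
            have : p + 1 - 1 = p := by omega
            rw [this]
            exact fun he => hcne p b (by omega) (by omega) hb3 he.symm
          · rw [hfc (t + k) (by omega) (by omega), hchain (t + k) (by omega) (by omega)]
            intro he
            have := hcinj (t + k) (t + k - 1) (by omega) (by omega) (by omega) (by omega) he
            omega
    · intro w hw hwv
      show (if t ≤ w ∧ w < t + k then f w else γ w) =
        (if t ≤ w ∧ w < t + (k + 1) then f w else γ w)
      by_cases hcond : t ≤ w ∧ w < t + k
      · rw [if_pos hcond, if_pos ⟨hcond.1, by omega⟩]
      · rw [if_neg hcond, if_neg (fun hc2 => hcond ⟨hc2.1, by omega⟩)]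

theorem forbidding_path_reconf (d p : ℕ) (hd : 2 ≤ d) (hp : d + 1 ≤ p)
    (c : ℕ → ℕ)
    (hcinj : ∀ i j, 1 ≤ i → i ≤ p → 1 ≤ j → j ≤ p → c i = c j → i = j)
    (hc : ∀ i, 1 ≤ i → i ≤ p → c i ∉ ({1, 2, 3} : Set ℕ))
    (Lu Lv : Set ℕ) (hLu : Lu ⊆ {1, 2, 3}) (hLv : Lv ⊆ {1, 2, 3})
    (a b : ℕ) (ha : a ∈ Lu) (hb : b ∈ Lv)
    (L : ℕ → Set ℕ) (hL0 : L 0 = Lu) (hLend : L (p + 2) = Lv)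
    (hL1 : L 1 = {a, c 1}) (hLp1 : L (p + 1) = {c p, b})
    (hLmid : ∀ i, 2 ≤ i → i ≤ p → L i = {c (i - 1), c i})
    (x y y' : ℕ) (hx : x ∈ Lu) (hy : y ∈ Lv) (hy' : y' ∈ Lv)
    (hxy : (x, y) ≠ (a, b)) (hxy' : (x, y') ≠ (a, b))
    (γ : ℕ → ℕ) (hγ : IsListPathColoring p d L γ)
    (hγ0 : γ 0 = x) (hγend : γ (p + 2) = y) :
    ∃ (m : ℕ) (seq : ℕ → ℕ → ℕ),
      seq 0 = γ ∧
      (∀ i ≤ m, IsListPathColoring p d L (seq i)) ∧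
      seq m 0 = x ∧ seq m (p + 2) = y' ∧
      (∀ i < m, ∃ v ≤ p + 2,
        v ≠ 0 ∧
        (v = p + 2 → i + 1 = m) ∧
        seq i v ≠ seq (i + 1) v ∧
        ∀ w ≤ p + 2, w ≠ v → seq i w = seq (i + 1) w) := by
  classical
  by_cases hyy : y = y'
  · subst hyy
    exact ⟨0, fun _ => γ, rfl, fun _ _ => hγ, hγ0, hγend,
      fun i hi => absurd hi (Nat.not_lt_zero i)⟩
  · by_cases hpy : γ (p + 1) = y'
    · -- hard case : γ (p+1) = y' forces y' = b
      have hgp1 : γ (p + 1) = c p ∨ γ (p + 1) = b := by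
        have := hγ.1 (p + 1) (by omega)
        rw [hLp1] at this; simpa using this
      have hy'b : y' = b := by
        rcases hgp1 with h | h
        · have hcp : c p = y' := by rw [← h]; exact hpy
          have : c p ∈ ({1, 2, 3} : Set ℕ) := by rw [hcp]; exact hLv hy'
          exact absurd this (hc p (by omega) (by omega))
        · rw [← hpy, h]
      have hex : ∃ s, 1 ≤ s ∧ ∀ i, s ≤ i → i ≤ p → γ i = c i :=
        ⟨p + 1, by omega, fun i h1 h2 => absurd h2 (by omega)⟩
      set t := Nat.find hex with htdef
      have htspec := Nat.find_spec hex
      have ht1 : 1 ≤ t := htspec.1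
      have htle : t ≤ p + 1 :=
        Nat.find_le ⟨by omega, fun i h1 h2 => absurd h2 (by omega)⟩
      have hmin : 2 ≤ t → t ≤ p + 1 → γ (t - 1) ≠ c (t - 1) := by
        intro h2 _ he
        have hprop : 1 ≤ t - 1 ∧ ∀ i, t - 1 ≤ i → i ≤ p → γ i = c i := by
          refine ⟨by omega, fun i h1 hip => ?_⟩
          rcases eq_or_lt_of_le h1 with h | h
          · rw [← h]; exact he
          · exact htspec.2 i (by omega) hip
        exact Nat.find_min hex (show t - 1 < t by omega) hprop
      exact forbidding_key d p hd hp c hcinj hc Lu Lv hLu hLv a b ha hb L hL0 hLend hL1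
        hLp1 hLmid x y y' hx hy hy' γ hγ hγ0 hγend hyy t ht1 (by omega) htspec.2
        (fun _ => hy'b ▸ hpy) hmin
        (fun _ hxeq => hxy' (by rw [hxeq, hy'b]))
        (fun h => absurd h (by omega))
    · -- easy case : recolor the endpoint directly
      exact forbidding_key d p hd hp c hcinj hc Lu Lv hLu hLv a b ha hb L hL0 hLend hL1
        hLp1 hLmid x y y' hx hy hy' γ hγ hγ0 hγend hyy (p + 2) (by omega) (by omega)
        (fun i h1 h2 => absurd h2 (by omega))
        (fun h => absurd h (by omega))
        (fun _ h => absurd h (by omega))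
        (fun h => absurd h (by omega))
        (fun _ => hpy)
end

section
/- Let G be a graph and F an induced subgraph of G with diameter at most d such that some (d,k)-coloring α of G assigns all k colors injectively to the vertices of F (so |V(F)| = k). Then in any reconfiguration sequence of (d,k)-colorings of G starting from α, the colors of all vertices of F remain unchanged. -/
theorem frozen_subgraph {V : Type*} (G : SimpleGraph V) (d k : ℕ) (F : Set V)
    (hFdiam : ∀ u ∈ F, ∀ v ∈ F, G.Reachable u v ∧ G.dist u v ≤ d)
    (α : V → Fin k) (hα : IsDKColoring G d k α)
    (hinj : Set.InjOn α F)
    (hsurj : ∀ col : Fin k, ∃ w ∈ F, α w = col)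
    (m : ℕ) (seq : ℕ → V → Fin k)
    (h0 : seq 0 = α)
    (hvalid : ∀ i ≤ m, IsDKColoring G d k (seq i))
    (hstep : ∀ i < m, OneStep (seq i) (seq (i + 1))) :
    ∀ i ≤ m, ∀ w ∈ F, seq i w = α w := by
  intro i
  induction i with
  | zero => intro _ w _; rw [h0]
  | succ n ih =>
    intro hn1 w hwF
    have hn : n ≤ m := Nat.le_of_succ_le hn1
    have ihn := ih hn
    obtain ⟨v, hv, hfix⟩ := hstep n (Nat.lt_of_succ_le hn1)
    by_cases hwv : w = v
    · subst hwv
      exfalso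
      -- the new color of w is held by some other vertex x of F
      obtain ⟨x, hxF, hxc⟩ := hsurj (seq (n+1) w)
      have hxw : x ≠ w := by
        intro h; subst h
        have : seq n x = α x := ihn x hxF
        exact hv (this.trans hxc)
      have hx1 : seq (n+1) x = α x := by
        rw [← hfix x hxw]; exact ihn x hxF
      have := hvalid (n+1) hn1 x w hxw (hFdiam x hxF w hwF).1 (hFdiam x hxF w hwF).2
      exact this (hx1.trans hxc)
    · rw [← hfix w hwv]; exact ihn w hwF
end

section
/- In a graph G consisting of disjoint 'token triangles' (copies of K_3) and 'token edges' (copies of K_2) joined by 'link edges' so that every vertex belongs to exactly one token triangle or token edge: if T is an independent set of G containing exactly one vertex from every token triangle and every token edge, and T' is obtained from T by sliding a token along one edge of G (i.e., T' = (T \ {u}) ∪ {v} for some edge uv with T' independent), then T' also contains exactly one vertex from every token triangle and token edge, and the slide occurs within a single token triangle or token edge. -/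
/-! Every gadget is a clique, so the token of `T` on the gadget of `v` would be adjacent to `v`
in `T'` unless that token is the one that moved, i.e. `u`. Hence the slide stays inside a gadget,
and replacing the representative of one fiber by another element of the same fiber keeps a
system of representatives. -/

def Set.IsTransversal {V ι : Type*} (g : V → ι) (T : Set V) : Prop :=
  ∀ i, ∃! t, t ∈ T ∧ g t = i

theorem Set.IsTransversal.insert_diff_singleton {V ι : Type*} {g : V → ι} {T : Set V}
    (hT : T.IsTransversal g) {u v : V} (hu : u ∈ T) (huv : g u = g v) :
    (insert v (T \ {u})).IsTransversal g := by
  intro i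
  by_cases hi : i = g u
  · subst hi
    refine ⟨v, ⟨Set.mem_insert _ _, huv.symm⟩, ?_⟩
    rintro t ⟨rfl | ⟨htT, htu⟩, htg⟩
    · rfl
    · exact absurd ((hT _).unique ⟨htT, htg⟩ ⟨hu, rfl⟩) htu
  · obtain ⟨t, ⟨htT, rfl⟩, huniq⟩ := hT i
    have htu : t ≠ u := fun h => hi (h ▸ rfl)
    refine ⟨t, ⟨Set.mem_insert_of_mem _ ⟨htT, htu⟩, rfl⟩, ?_⟩
    rintro s ⟨rfl | ⟨hsT, -⟩, hsg⟩
    · exact absurd (huv.trans hsg).symm hi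
    · exact huniq s ⟨hsT, hsg⟩

theorem SimpleGraph.eq_of_isIndepSet_insert_diff_singleton {V ι : Type*} {G : SimpleGraph V}
    {g : V → ι} (hclique : ∀ u v : V, g u = g v → u ≠ v → G.Adj u v) {T : Set V} {u v : V}
    (hv : v ∉ T) (hcover : ∃ t ∈ T, g t = g v) (hind : G.IsIndepSet (insert v (T \ {u}))) :
    g u = g v := by
  by_contra hne
  obtain ⟨t, htT, htg⟩ := hcover
  have htu : t ≠ u := fun h => hne (h ▸ htg)
  have htv : t ≠ v := fun h => hv (h ▸ htT)
  exact hind (Set.mem_insert_of_mem _ ⟨htT, htu⟩) (Set.mem_insert _ _) htv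
    (hclique t v htg htv)

theorem token_slide_stays_in_gadget_general {V : Type*} (G : SimpleGraph V)
    {ι : Type*} (g : V → ι)
    -- every gadget (fiber of `g`) is a clique: token triangles and token edges
    (hclique : ∀ u v : V, g u = g v → u ≠ v → G.Adj u v)
    (T : Set V)
    -- T is standard: exactly one token on each gadget
    (hTstd : ∀ i : ι, ∃! t : V, t ∈ T ∧ g t = i)
    (u v : V) (hu : u ∈ T) (hv : v ∉ T)
    (T' : Set V) (hT' : T' = insert v (T \ {u}))
    (hT'ind : ∀ a ∈ T', ∀ b ∈ T', ¬ G.Adj a b) :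
    (∀ i : ι, ∃! t : V, t ∈ T' ∧ g t = i) ∧ g u = g v := by
  subst hT'
  have hguv : g u = g v :=
    G.eq_of_isIndepSet_insert_diff_singleton hclique hv (hTstd (g v)).exists
      fun a ha b hb _ => hT'ind a ha b hb
  exact ⟨Set.IsTransversal.insert_diff_singleton hTstd hu hguv, hguv⟩

theorem token_slide_stays_in_gadget {V : Type*} [Fintype V] (G : SimpleGraph V)
    {ι : Type*} (g : V → ι)
    -- every gadget (fiber of `g`) is a clique: token triangles and token edges
    (hclique : ∀ u v : V, g u = g v → u ≠ v → G.Adj u v)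
    -- every gadget is a copy of K_2 or K_3
    (hsize : ∀ i : ι, 2 ≤ {v : V | g v = i}.ncard ∧ {v : V | g v = i}.ncard ≤ 3)
    (T : Set V)
    -- T is an independent set
    (hTind : ∀ a ∈ T, ∀ b ∈ T, ¬ G.Adj a b)
    -- T is standard: exactly one token on each gadget
    (hTstd : ∀ i : ι, ∃! t : V, t ∈ T ∧ g t = i)
    (u v : V) (hu : u ∈ T) (hv : v ∉ T) (huv : G.Adj u v)
    (T' : Set V) (hT' : T' = insert v (T \ {u}))
    (hT'ind : ∀ a ∈ T', ∀ b ∈ T', ¬ G.Adj a b) :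
    (∀ i : ι, ∃! t : V, t ∈ T' ∧ g t = i) ∧ g u = g v :=
  token_slide_stays_in_gadget_general G g hclique T hTstd u v hu hv T' hT' hT'ind
end

section
/- Let G be any graph and let G' be the split graph constructed from G by: taking V(G) as an independent set S, adding one vertex v_e for each edge e ∈ E(G), joining v_e to both endpoints of e, and making {v_e : e ∈ E(G)} a clique K. Then G has a proper ℓ-coloring if and only if G' has a (2, m+ℓ)-coloring, where m = |E(G)|. -/
/-- The split graph built from `G`: the vertices of `G` form an independent set,
one new vertex per edge of `G` (joined to the two endpoints of that edge), and
the new vertices form a clique. -/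
def splitGraphOf {V : Type*} (G : SimpleGraph V) : SimpleGraph (V ⊕ G.edgeSet) where
  Adj x y := match x, y with
    | .inl _, .inl _ => False
    | .inl a, .inr e => a ∈ (e : Sym2 V)
    | .inr e, .inl a => a ∈ (e : Sym2 V)
    | .inr e, .inr f => e ≠ f
  symm := by
    constructor
    rintro (a | e) (b | f) h
    · exact h
    · exact h
    · exact h
    · exact h.symm
  loopless := by
    constructor
    rintro (a | e) h
    · exact h
    · exact h rfl

/-- A (2,k)-coloring: distinct vertices at distance at most 2 (and reachable)
receive different colors. -/
def Is2KColoring {W : Type*} (H : SimpleGraph W) (k : ℕ) (β : W → Fin k) : Prop :=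
  ∀ a b : W, a ≠ b → H.Reachable a b → H.dist a b ≤ 2 → β a ≠ β b

/-!
The `m` edge vertices form a clique, so a (2, m + ℓ)-coloring spends `m` distinct colors on them.
Every vertex of `G` lying on an edge is within distance 2 of all edge vertices, and adjacent
vertices of `G` are at distance 2 through their edge vertex; so on the non-isolated vertices the
coloring is a proper coloring with the `ℓ` remaining colors, and isolated vertices may take any
of them. Conversely, give the edge vertices the first `m` colors and shift a proper `ℓ`-coloring
of `G` onto the last `ℓ`: two vertices of `G` are within distance 2 only when adjacent in `G`.
-/

theorem SimpleGraph.reachable_and_dist_le_iff {W : Type*} {H : SimpleGraph W} {a b : W} {n : ℕ} :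
    H.Reachable a b ∧ H.dist a b ≤ n ↔ ∃ p : H.Walk a b, p.length ≤ n := by
  constructor
  · rintro ⟨hr, hd⟩
    obtain ⟨p, hp⟩ := hr.exists_walk_length_eq_dist
    exact ⟨p, hp ▸ hd⟩
  · rintro ⟨p, hp⟩
    exact ⟨p.reachable, (dist_le p).trans hp⟩

theorem is2KColoring_iff {W : Type*} {H : SimpleGraph W} {k : ℕ} {β : W → Fin k} :
    Is2KColoring H k β ↔ ∀ a b, a ≠ b → ∀ p : H.Walk a b, p.length ≤ 2 → β a ≠ β b := by
  refine forall₂_congr fun a b => imp_congr_right fun _ => ?_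
  rw [← and_imp, SimpleGraph.reachable_and_dist_le_iff, forall_exists_index]

section splitGraphOf

variable {V : Type*} {G : SimpleGraph V}

theorem splitGraphOf_adj_inl_inr {a : V} {e : G.edgeSet} (h : a ∈ (e : Sym2 V)) :
    (splitGraphOf G).Adj (.inl a) (.inr e) := h

theorem splitGraphOf_adj_inr_inr {e f : G.edgeSet} (h : e ≠ f) :
    (splitGraphOf G).Adj (.inr e) (.inr f) := h

/-- The original vertices are independent, so a short walk between two of them passes through
a single edge vertex whose edge contains both. -/
theorem adj_of_splitGraphOf_walk {a b : V} (hab : a ≠ b)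
    (p : (splitGraphOf G).Walk (.inl a) (.inl b)) (hp : p.length ≤ 2) : G.Adj a b := by
  match p, hp with
  | .cons (v := .inr e) ha (.cons (v := .inl _) hb .nil), _ =>
    rw [← G.mem_edgeSet, ← (Sym2.mem_and_mem_iff hab).1 ⟨ha, hb⟩]
    exact e.2
  | .cons (v := .inl _) h _, _ => exact h.elim
  | .cons _ (.cons _ (.cons _ _)), hp => simp at hp
  | .nil, _ => exact (hab rfl).elim

theorem exists_splitGraphOf_walk_inl_inl {a b : V} (h : G.Adj a b) :
    ∃ p : (splitGraphOf G).Walk (.inl a) (.inl b), p.length ≤ 2 :=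
  let e : G.edgeSet := ⟨s(a, b), h⟩
  ⟨.cons (splitGraphOf_adj_inl_inr (e := e) (Sym2.mem_mk_left a b))
    ((splitGraphOf_adj_inl_inr (e := e) (Sym2.mem_mk_right a b)).symm.toWalk), by simp⟩

theorem exists_splitGraphOf_walk_inl_inr {a : V} {e : G.edgeSet} (ha : a ∈ (e : Sym2 V))
    (f : G.edgeSet) : ∃ p : (splitGraphOf G).Walk (.inl a) (.inr f), p.length ≤ 2 := by
  by_cases hef : e = f
  · subst hef
    exact ⟨(splitGraphOf_adj_inl_inr ha).toWalk, by simp⟩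
  · exact ⟨.cons (splitGraphOf_adj_inl_inr ha) (splitGraphOf_adj_inr_inr hef).toWalk, by simp⟩

variable [Fintype G.edgeSet] {ℓ : ℕ}

theorem is2KColoring_splitGraphOf_of_coloring {α : V → Fin ℓ}
    (hα : ∀ x y, G.Adj x y → α x ≠ α y) :
    Is2KColoring (splitGraphOf G) (Fintype.card G.edgeSet + ℓ)
      (finSumFinEquiv ∘ Sum.map (Fintype.equivFin G.edgeSet) α ∘ Sum.swap) := by
  rw [is2KColoring_iff]
  rintro (a | e) (b | f) hne p hp hc <;>
    simp only [Function.comp_apply, EmbeddingLike.apply_eq_iff_eq, Sum.swap_inl, Sum.swap_inr,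
      Sum.map_inl, Sum.map_inr, Sum.inl.injEq, Sum.inr.injEq, reduceCtorEq] at hc
  · exact hα a b (adj_of_splitGraphOf_walk (by rintro rfl; exact hne rfl) p hp) hc
  · exact hne (congrArg _ hc)

theorem exists_injOn_compl_range_fin {ι : Type*} [Fintype ι] {E : ι → Fin (Fintype.card ι + ℓ)}
    (hE : Function.Injective E) (hne : (Set.range E)ᶜ.Nonempty) :
    ∃ r : Fin (Fintype.card ι + ℓ) → Fin ℓ, (Set.range E)ᶜ.InjOn r := by
  have hcard : Nat.card ↥(Set.range E)ᶜ = ℓ := by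
    rw [Nat.card_coe_set_eq]
    apply Set.ncard_compl_of_ncard_eq_add
    rw [Set.ncard_range_of_injective hE, Nat.card_eq_fintype_card, Nat.card_eq_fintype_card,
      Fintype.card_fin, add_comm]
  let eqv := (Finite.equivFin ↥(Set.range E)ᶜ).trans (finCongr hcard)
  have : Nonempty (Fin ℓ) := ⟨eqv ⟨_, hne.some_mem⟩⟩
  exact Set.exists_injOn_iff_injective.2 ⟨eqv, eqv.injective⟩

theorem exists_coloring_of_is2KColoring_splitGraphOf
    {β : V ⊕ G.edgeSet → Fin (Fintype.card G.edgeSet + ℓ)}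
    (hβ : Is2KColoring (splitGraphOf G) (Fintype.card G.edgeSet + ℓ) β) :
    ∃ α : V → Fin ℓ, ∀ x y, G.Adj x y → α x ≠ α y := by
  rw [is2KColoring_iff] at hβ
  have hE : Function.Injective (β ∘ Sum.inr) := fun e f h => by_contra fun hef =>
    hβ _ _ (by simpa using hef) (splitGraphOf_adj_inr_inr hef).toWalk (by simp) h
  have hcol : ∀ a (e : G.edgeSet), a ∈ (e : Sym2 V) →
      β (.inl a) ∈ (Set.range (β ∘ Sum.inr))ᶜ := by
    rintro a e ha ⟨f, hf⟩
    obtain ⟨p, hp⟩ := exists_splitGraphOf_walk_inl_inr ha f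
    exact hβ _ _ Sum.inl_ne_inr p hp hf.symm
  rcases isEmpty_or_nonempty V with _ | ⟨⟨v⟩⟩
  · exact ⟨isEmptyElim, fun x => isEmptyElim x⟩
  have hne : (Set.range (β ∘ Sum.inr))ᶜ.Nonempty := by
    by_cases hv : β (.inl v) ∈ Set.range (β ∘ Sum.inr)
    · obtain ⟨f, -⟩ := hv
      exact ⟨_, hcol _ f (Sym2.out_fst_mem _)⟩
    · exact ⟨_, hv⟩
  obtain ⟨r, hr⟩ := exists_injOn_compl_range_fin hE hne
  refine ⟨r ∘ β ∘ Sum.inl, fun x y hxy => ?_⟩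
  let e : G.edgeSet := ⟨s(x, y), hxy⟩
  obtain ⟨p, hp⟩ := exists_splitGraphOf_walk_inl_inl hxy
  exact hr.ne (hcol x e (Sym2.mem_mk_left x y)) (hcol y e (Sym2.mem_mk_right x y))
    (hβ _ _ (by simpa using hxy.ne) p hp)

end splitGraphOf

theorem coloring_iff_split_2coloring_general {V : Type*}
    (G : SimpleGraph V) [Fintype G.edgeSet] (ℓ : ℕ) :
    (∃ α : V → Fin ℓ, ∀ x y : V, G.Adj x y → α x ≠ α y) ↔
    (∃ β : (V ⊕ G.edgeSet) → Fin (Fintype.card G.edgeSet + ℓ),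
      Is2KColoring (splitGraphOf G) (Fintype.card G.edgeSet + ℓ) β) :=
  ⟨fun ⟨_, hα⟩ => ⟨_, is2KColoring_splitGraphOf_of_coloring hα⟩,
    fun ⟨_, hβ⟩ => exists_coloring_of_is2KColoring_splitGraphOf hβ⟩

theorem coloring_iff_split_2coloring {V : Type*} [Fintype V] [DecidableEq V]
    (G : SimpleGraph V) [Fintype G.edgeSet] (ℓ : ℕ) :
    (∃ α : V → Fin ℓ, ∀ x y : V, G.Adj x y → α x ≠ α y) ↔
    (∃ β : (V ⊕ G.edgeSet) → Fin (Fintype.card G.edgeSet + ℓ),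
      Is2KColoring (splitGraphOf G) (Fintype.card G.edgeSet + ℓ) β) :=
  coloring_iff_split_2coloring_general G ℓ
end
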